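/- Let n ≥ 1, let U be a real orthogonal n×n matrix and Λ a diagonal n×n matrix with Λ_ii > 0 for all i, and set S = U Λ Uᵀ. Define d(x', x'') = √((x' − x'')ᵀ S (x' − x'')) for x', x'' ∈ ℝⁿ. Let X ⊆ ℝⁿ, f : ℝⁿ → ℝ, ε ≥ 0 and δ* ≥ 0. Suppose that |f(x') − f(x'')| ≤ δ* holds for all x', x'' ∈ X satisfying the box constraints |(Uᵀx')_i − (Uᵀx'')_i| ≤ ε/√(Λ_ii) for every i. Then for every δ ≥ δ*, f is ε-δ-individually fair with respect to d on X, i.e., for all x', x'' ∈ X with d(x', x'') ≤ ε one has |f(x') − f(x'')| ≤ δ. -/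

import Mathlib

open Matrix

/-!
Writing `y = Uᵀ (x' - x'')`, the squared Mahalanobis distance is `∑ᵢ Λᵢ yᵢ²`. When it is at
most `ε²`, so is every single term, i.e. `|yᵢ| ≤ ε / √Λᵢ`: the ellipsoid `d ≤ ε` lies inside
the box of the relaxation, over which `δ*` bounds `|f x' - f x''|`.
-/

theorem dotProduct_mulVec_mul_diagonal_mul_transpose {ι R : Type*} [Fintype ι] [DecidableEq ι]
    [CommRing R] (U : Matrix ι ι R) (lam : ι → R) (v : ι → R) :
    v ⬝ᵥ (U * diagonal lam * Uᵀ) *ᵥ v = ∑ j, lam j * (Uᵀ *ᵥ v) j ^ 2 := by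
  rw [mul_assoc, ← mulVec_mulVec, dotProduct_mulVec, ← mulVec_transpose, ← mulVec_mulVec]
  simp only [dotProduct, mulVec_diagonal, sq]
  exact Finset.sum_congr rfl fun j _ => by ring

theorem abs_le_div_sqrt_of_mul_sq_le {a y ε : ℝ} (ha : 0 < a) (hε : 0 ≤ ε)
    (h : a * y ^ 2 ≤ ε ^ 2) : |y| ≤ ε / √a := by
  rw [← Real.sqrt_sq hε, ← Real.sqrt_sq_eq_abs, ← Real.sqrt_div' _ ha.le]
  exact Real.sqrt_le_sqrt ((le_div_iff₀ ha).2 (by linarith))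

theorem abs_transpose_mulVec_le_of_sqrt_le {ι : Type*} [Fintype ι] [DecidableEq ι]
    (U : Matrix ι ι ℝ) {lam : ι → ℝ} (hlam : ∀ i, 0 < lam i) {v : ι → ℝ} {ε : ℝ}
    (hv : √(v ⬝ᵥ (U * diagonal lam * Uᵀ) *ᵥ v) ≤ ε) (i : ι) :
    |(Uᵀ *ᵥ v) i| ≤ ε / √(lam i) := by
  rw [dotProduct_mulVec_mul_diagonal_mul_transpose] at hv
  have hterm : ∀ j, 0 ≤ lam j * (Uᵀ *ᵥ v) j ^ 2 := fun j => by
    have := hlam j; positivity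
  have hε : 0 ≤ ε := (Real.sqrt_nonneg _).trans hv
  refine abs_le_div_sqrt_of_mul_sq_le (hlam i) hε ?_
  calc lam i * (Uᵀ *ᵥ v) i ^ 2
      ≤ ∑ j, lam j * (Uᵀ *ᵥ v) j ^ 2 :=
        Finset.single_le_sum (fun j _ => hterm j) (Finset.mem_univ i)
    _ ≤ ε ^ 2 := (Real.sqrt_le_left hε).1 hv

theorem mahalanobis_relaxation_sound_general
    (n : ℕ)
    (U : Matrix (Fin n) (Fin n) ℝ)
    (lam : Fin n → ℝ) (hlam : ∀ i, 0 < lam i)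
    (S : Matrix (Fin n) (Fin n) ℝ)
    (hS : S = U * Matrix.diagonal lam * U.transpose)
    (d : (Fin n → ℝ) → (Fin n → ℝ) → ℝ)
    (hd : ∀ x' x'', d x' x'' = Real.sqrt ((x' - x'') ⬝ᵥ S.mulVec (x' - x'')))
    (X : Set (Fin n → ℝ)) (f : (Fin n → ℝ) → ℝ)
    (ε δstar : ℝ)
    (hbound : ∀ x' ∈ X, ∀ x'' ∈ X,
      (∀ i, |U.transpose.mulVec x' i - U.transpose.mulVec x'' i|
              ≤ ε / Real.sqrt (lam i)) →
      |f x' - f x''| ≤ δstar) :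
    ∀ δ, δstar ≤ δ →
      ∀ x' ∈ X, ∀ x'' ∈ X, d x' x'' ≤ ε → |f x' - f x''| ≤ δ := by
  intro δ hδ x' hx' x'' hx'' hdist
  rw [hd, hS] at hdist
  refine (hbound x' hx' x'' hx'' fun i => ?_).trans hδ
  rw [← Pi.sub_apply, ← mulVec_sub]
  exact abs_transpose_mulVec_le_of_sqrt_le U hlam hdist i

/-- Soundness of the box relaxation of the Mahalanobis fairness constraint:
a worst-case bound over the relaxed feasible set certifies ε-δ-IF. -/
theorem mahalanobis_relaxation_sound
    (n : ℕ) (hn : 1 ≤ n)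
    (U : Matrix (Fin n) (Fin n) ℝ) (hU : U.transpose * U = 1)
    (lam : Fin n → ℝ) (hlam : ∀ i, 0 < lam i)
    (S : Matrix (Fin n) (Fin n) ℝ)
    (hS : S = U * Matrix.diagonal lam * U.transpose)
    (d : (Fin n → ℝ) → (Fin n → ℝ) → ℝ)
    (hd : ∀ x' x'', d x' x'' = Real.sqrt ((x' - x'') ⬝ᵥ S.mulVec (x' - x'')))
    (X : Set (Fin n → ℝ)) (f : (Fin n → ℝ) → ℝ)
    (ε δstar : ℝ) (hε : 0 ≤ ε) (hδstar : 0 ≤ δstar)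
    (hbound : ∀ x' ∈ X, ∀ x'' ∈ X,
      (∀ i, |U.transpose.mulVec x' i - U.transpose.mulVec x'' i|
              ≤ ε / Real.sqrt (lam i)) →
      |f x' - f x''| ≤ δstar) :
    ∀ δ, δstar ≤ δ →
      ∀ x' ∈ X, ∀ x'' ∈ X, d x' x'' ≤ ε → |f x' - f x''| ≤ δ :=
  mahalanobis_relaxation_sound_general n U lam hlam S hS d hd X f ε δstar hbound
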